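/- arXiv:1806.06333 — 2 statements merged into one kernel-verified Lean document; each statement's English description precedes it below -/
import Mathlib

section
/- Let s ⊆ ℝⁿ be a nonempty convex set, let g : ℝⁿ → ℝ be convex on s, and let x ∈ s. Suppose z : ℝ → ℝⁿ is such that for every α > 0: z(α) ∈ s and g(z(α)) + (1/α)·⟨x − z(α), y − z(α)⟩ ≤ g(y) for all y ∈ s (i.e. z(α) is the proximal point prox_{αg}(x), characterized by (x − z(α))/α being a subgradient of g restricted to s at z(α)). Then z(α) → x as α → 0⁺, i.e. ‖z(α) − x‖ tends to 0 as α tends to 0 from the right. -/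
/-!
Testing the variational inequality at `y = x` gives `‖z(α) - x‖² ≤ α (g x - g (z α))`.
The inequality at `α = 1` says that `g` has the affine minorant
`y ↦ g (z 1) + ⟪x - z 1, y - z 1⟫` on `s`, so `g x - g (z α)` grows at most linearly in
`‖z α - x‖`. Hence `‖z α - x‖² = O(α)`.
-/

open Filter Topology
open scoped RealInnerProductSpace

variable {E : Type*} [NormedAddCommGroup E] [InnerProductSpace ℝ E]

/-- `z` satisfies the variational inequality characterizing `prox_{αg}(x)` over `s`. -/
def IsProxPoint (s : Set E) (g : E → ℝ) (α : ℝ) (x z : E) : Prop :=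
  z ∈ s ∧ ∀ y ∈ s, g z + (1 / α) * ⟪x - z, y - z⟫ ≤ g y

lemma sq_le_of_sq_le_mul_add_mul {r α B M : ℝ} (h : r ^ 2 ≤ α * (B + M * r)) :
    r ^ 2 ≤ 2 * α * B + α ^ 2 * M ^ 2 := by
  nlinarith [sq_nonneg (r - α * M)]

namespace IsProxPoint

variable {s : Set E} {g : E → ℝ} {α : ℝ} {x z : E}

lemma norm_sub_sq_le (h : IsProxPoint s g α x z) (hα : 0 < α) (hx : x ∈ s) :
    ‖z - x‖ ^ 2 ≤ α * (g x - g z) := by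
  have hvi := h.2 x hx
  rw [real_inner_self_eq_norm_sq, norm_sub_rev] at hvi
  have : α * ((1 / α) * ‖z - x‖ ^ 2) = ‖z - x‖ ^ 2 := by field_simp
  nlinarith

lemma norm_sub_sq_le_of_affine_le (h : IsProxPoint s g α x z) (hα : 0 < α) (hx : x ∈ s)
    {c : ℝ} {v : E} (hmin : ∀ y ∈ s, c + ⟪v, y⟫ ≤ g y) :
    ‖z - x‖ ^ 2 ≤ 2 * α * (g x - c - ⟪v, x⟫) + α ^ 2 * ‖v‖ ^ 2 := by
  refine sq_le_of_sq_le_mul_add_mul ((h.norm_sub_sq_le hα hx).trans ?_)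
  gcongr
  have hcs : ⟪v, x - z⟫ ≤ ‖v‖ * ‖z - x‖ := by
    rw [norm_sub_rev]
    exact real_inner_le_norm v (x - z)
  have := hmin z h.1
  rw [inner_sub_right] at hcs
  linarith

end IsProxPoint

theorem tendsto_norm_sub_of_isProxPoint {s : Set E} {g : E → ℝ} {x : E} {z : ℝ → E}
    (hz : ∀ α : ℝ, 0 < α → IsProxPoint s g α x (z α)) (hx : x ∈ s)
    {c : ℝ} {v : E} (hmin : ∀ y ∈ s, c + ⟪v, y⟫ ≤ g y) :
    Tendsto (fun α : ℝ => ‖z α - x‖) (𝓝[>] 0) (𝓝 0) := by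
  set B := g x - c - ⟪v, x⟫
  have hbound : Tendsto (fun α : ℝ => 2 * α * B + α ^ 2 * ‖v‖ ^ 2) (𝓝[>] 0) (𝓝 0) :=
    ((by fun_prop : Continuous fun α : ℝ => 2 * α * B + α ^ 2 * ‖v‖ ^ 2).tendsto' 0 0
      (by simp)).mono_left nhdsWithin_le_nhds
  refine squeeze_zero' (Eventually.of_forall fun _ => norm_nonneg _) ?_
    (by simpa using hbound.sqrt)
  filter_upwards [self_mem_nhdsWithin] with α hα
  exact Real.le_sqrt_of_sq_le ((hz α hα).norm_sub_sq_le_of_affine_le hα hx hmin)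

theorem stmt_4_general (n : ℕ) (s : Set (EuclideanSpace ℝ (Fin n)))
    (g : EuclideanSpace ℝ (Fin n) → ℝ)
    (x : EuclideanSpace ℝ (Fin n)) (hx : x ∈ s)
    (z : ℝ → EuclideanSpace ℝ (Fin n))
    (hz : ∀ α : ℝ, 0 < α → z α ∈ s ∧
      ∀ y ∈ s, g (z α) + (1 / α) * ⟪x - z α, y - z α⟫ ≤ g y) :
    Tendsto (fun α : ℝ => ‖z α - x‖) (𝓝[>] 0) (𝓝 0) := by
  refine tendsto_norm_sub_of_isProxPoint hz hx (c := g (z 1) - ⟪x - z 1, z 1⟫) (v := x - z 1) ?_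
  intro y hy
  have := (hz 1 one_pos).2 y hy
  rw [div_one, one_mul, inner_sub_right] at this
  linarith

/-- The proximal point `prox_{αg}(x)` of a point `x` in the domain converges to `x`
as the parameter `α` tends to `0` from the right. -/
theorem stmt_4 (n : ℕ) (s : Set (EuclideanSpace ℝ (Fin n))) (hs : s.Nonempty)
    (hsconv : Convex ℝ s)
    (g : EuclideanSpace ℝ (Fin n) → ℝ) (hg : ConvexOn ℝ s g)
    (x : EuclideanSpace ℝ (Fin n)) (hx : x ∈ s)
    (z : ℝ → EuclideanSpace ℝ (Fin n))
    (hz : ∀ α : ℝ, 0 < α → z α ∈ s ∧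
      ∀ y ∈ s, g (z α) + (1 / α) * ⟪x - z α, y - z α⟫ ≤ g y) :
    Tendsto (fun α : ℝ => ‖z α - x‖) (𝓝[>] 0) (𝓝 0) :=
  stmt_4_general n s g x hx z hz
end

section
/- Fix μ > 0, let f : ℝⁿ → ℝ be convex and differentiable everywhere with ∇f differentiable at x*, with Hessian ∇²f(x*), and let F₁ := f + μ‖·‖₁. Suppose x* is an optimal solution of min F₁, i.e. 0 ∈ ∇f(x*) + ∂(μ‖·‖₁)(x*). Define ℰ := {j : |(∇f(x*))ⱼ| = μ}, K := {j ∈ ℰ : x*ⱼ = 0}, and the cone 𝒱 := {u ∈ ℝⁿ : uⱼ = 0 for all j ∉ ℰ, and uⱼ·(∇f(x*))ⱼ ≤ 0 for all j ∈ K}. Then the following are equivalent: (i) the map x ↦ ∇f(x) + ∂(μ‖·‖₁)(x) is strongly metrically subregular at x* for 0, i.e. there exist κ, ε > 0 such that ‖x − x*‖ ≤ κ‖w‖ whenever ‖x − x*‖ ≤ ε and w ∈ ∇f(x) + ∂(μ‖·‖₁)(x); (ii) ⟨∇²f(x*)u, u⟩ > 0 for every nonzero u ∈ 𝒱; (iii)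 ker ∇²f(x*) ∩ 𝒱 = {0}. -/
/-!
Write `s* = -∇f(x*)` for the optimal subgradient. The cone `𝒱` is exactly the set of directions
`u` with `s*ⱼ uⱼ = μ |uⱼ|` whenever `x*ⱼ = 0`, i.e. the directions along which `s*` remains a
subgradient of `μ‖·‖₁` at `x* + t u` for all small `t > 0`.

(i) ⇒ (iii): for `u ∈ 𝒱 ∩ ker ∇²f(x*)`, the point `∇f(x* + t u) + s*` lies in `∂F₁(x* + t u)` and
is `o(t)`, so subregularity forces `u = 0`.
(ii) ⇒ (i): if subregularity fails, there are `xₖ → x*` and `wₖ ∈ ∂F₁(xₖ)` with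
`‖wₖ‖ = o(‖xₖ - x*‖)`; a limit `u` of the normalized directions `(xₖ - x*) / ‖xₖ - x*‖` lies in
`𝒱`, and monotonicity of `∂(μ‖·‖₁)` gives `⟪∇²f(x*) u, u⟫ ≤ 0`.
(ii) ⇔ (iii): `∇²f(x*)` is symmetric (Schwarz) and positive semidefinite (convexity of `f`), and
for such an operator `⟪∇²f(x*) u, u⟫ = 0` forces `∇²f(x*) u = 0`.
-/

open scoped RealInnerProductSpace
open Filter Topology

/-- `s ∈ ∂(μ|·|)(a)`. -/
def IsAbsSubgradient (μ a s : ℝ) : Prop :=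
  (a ≠ 0 → s = μ * Real.sign a) ∧ (a = 0 → |s| ≤ μ)

theorem isAbsSubgradient_iff {μ a s : ℝ} (hμ : 0 ≤ μ) :
    IsAbsSubgradient μ a s ↔ |s| ≤ μ ∧ s * a = μ * |a| := by
  rcases lt_trichotomy a 0 with ha | rfl | ha
  · rw [abs_of_neg ha, show μ * -a = -μ * a by ring, mul_left_inj' ha.ne]
    constructor
    · rintro ⟨h, -⟩; rw [h ha.ne, Real.sign_of_neg ha]; simp [abs_of_nonneg hμ]
    · rintro ⟨-, rfl⟩; exact ⟨fun _ => by rw [Real.sign_of_neg ha]; ring, fun h => absurd h ha.ne⟩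
  · simp [IsAbsSubgradient]
  · rw [abs_of_pos ha, mul_left_inj' ha.ne']
    constructor
    · rintro ⟨h, -⟩; rw [h ha.ne', Real.sign_of_pos ha]; simp [abs_of_nonneg hμ]
    · rintro ⟨-, rfl⟩; exact ⟨fun _ => by rw [Real.sign_of_pos ha]; ring, fun h => absurd h ha.ne'⟩

namespace IsAbsSubgradient

variable {μ a b s t v : ℝ}

theorem mul_sub_nonneg (hμ : 0 ≤ μ) (hs : IsAbsSubgradient μ a s)
    (ht : IsAbsSubgradient μ b t) : 0 ≤ (s - t) * (a - b) := by
  obtain ⟨hs₁, hs₂⟩ := (isAbsSubgradient_iff hμ).1 hs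
  obtain ⟨ht₁, ht₂⟩ := (isAbsSubgradient_iff hμ).1 ht
  have hsb : s * b ≤ μ * |b| := (le_abs_self _).trans (by rw [abs_mul]; gcongr)
  have hta : t * a ≤ μ * |a| := (le_abs_self _).trans (by rw [abs_mul]; gcongr)
  nlinarith

theorem eventually_add_mul (hμ : 0 ≤ μ) (hs : IsAbsSubgradient μ a s)
    (hv : a = 0 → s * v = μ * |v|) : ∀ᶠ t in 𝓝[>] 0, IsAbsSubgradient μ (a + t * v) s := by
  rcases eq_or_ne a 0 with rfl | ha
  · filter_upwards [self_mem_nhdsWithin] with t (ht : 0 < t)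
    refine (isAbsSubgradient_iff hμ).2 ⟨((isAbsSubgradient_iff hμ).1 hs).1, ?_⟩
    rw [zero_add, abs_mul, abs_of_pos ht, mul_left_comm, hv rfl]
    ring
  · have hlim : Tendsto (fun t => a + t * v) (𝓝[>] 0) (𝓝 a) := by
      refine tendsto_nhdsWithin_of_tendsto_nhds ?_
      simpa using (show Continuous fun t : ℝ => a + t * v by fun_prop).tendsto 0
    rcases ha.lt_or_gt with ha | ha
    · filter_upwards [hlim.eventually_lt_const ha] with t ht
      exact ⟨fun _ => by rw [Real.sign_of_neg ht, ← Real.sign_of_neg ha, hs.1 ha.ne],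
        fun h => absurd h ht.ne⟩
    · filter_upwards [hlim.eventually_const_lt ha] with t ht
      exact ⟨fun _ => by rw [Real.sign_of_pos ht, ← Real.sign_of_pos ha, hs.1 ha.ne'],
        fun h => absurd h ht.ne'⟩

theorem abs_eq (hμ : 0 ≤ μ) (hs : IsAbsSubgradient μ a s) (ha : a ≠ 0) : |s| = μ := by
  rcases ha.lt_or_gt with ha' | ha' <;>
    simp [hs.1 ha, Real.sign_of_neg, Real.sign_of_pos, ha', abs_of_nonneg hμ]

end IsAbsSubgradient

theorem mul_eq_mul_abs_iff {μ s v : ℝ} (hs : |s| ≤ μ) :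
    s * v = μ * |v| ↔ (¬|s| = μ → v = 0) ∧ (|s| = μ → 0 ≤ v * s) := by
  constructor
  · intro h
    refine ⟨fun hne => by_contra fun hv => ?_, fun hsμ => ?_⟩
    · have : |s| * |v| < μ * |v| := by gcongr; exact lt_of_le_of_ne hs hne
      rw [← abs_mul, ← h] at this
      exact (le_abs_self _).not_gt this
    · rw [mul_comm, h]; exact mul_nonneg (hsμ ▸ abs_nonneg s) (abs_nonneg v)
  · rintro ⟨h₁, h₂⟩
    by_cases hsμ : |s| = μ
    · rw [← hsμ, ← abs_mul, mul_comm]; exact (abs_of_nonneg (h₂ hsμ)).symm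
    · simp [h₁ hsμ]

section Hessian

variable {E : Type*} [NormedAddCommGroup E] [InnerProductSpace ℝ E] [CompleteSpace E]
  {f : E → ℝ} {f' : E → E} {H : E →L[ℝ] E} {x : E}

theorem isSymmetric_of_hasFDerivAt_gradient (hf : ∀ y, HasGradientAt f (f' y) y)
    (hH : HasFDerivAt f' H x) : (H : E →ₗ[ℝ] E).IsSymmetric := by
  let J := (InnerProductSpace.toDual ℝ E).toContinuousLinearEquiv.toContinuousLinearMap
  have hJ : HasFDerivAt (fun y => J (f' y)) (J.comp H) x := J.hasFDerivAt.comp x hH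
  intro v w
  simpa [J, real_inner_comm] using
    second_derivative_symmetric (fun y => hasGradientAt_iff_hasFDerivAt.mp (hf y)) hJ v w

theorem inner_apply_self_nonneg_of_convexOn (hf : ConvexOn ℝ Set.univ f)
    (hf' : ∀ y, HasGradientAt f (f' y) y) (hH : HasFDerivAt f' H x) (u : E) :
    0 ≤ ⟪H u, u⟫ := by
  have hline : ∀ t : ℝ, HasDerivAt (fun t : ℝ => x + t • u) u t := fun t => by
    simpa using ((hasDerivAt_id t).smul_const u).const_add x
  have hφ : ∀ t : ℝ, HasDerivAt (fun t => f (x + t • u)) ⟪f' (x + t • u), u⟫ t := fun t => by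
    have := (hasGradientAt_iff_hasFDerivAt.mp (hf' _)).comp_hasDerivAt t (hline t)
    simp only [InnerProductSpace.toDual_apply_apply] at this
    exact this
  have hconv : ConvexOn ℝ Set.univ (fun t : ℝ => f (x + t • u)) := by
    simpa [Function.comp_def, AffineMap.lineMap_apply_module', add_comm] using
      hf.comp_affineMap (AffineMap.lineMap x (x + u))
  have hmono : Monotone fun t : ℝ => ⟪f' (x + t • u), u⟫ := by
    intro s t hst
    simpa only [(hφ _).deriv] using
      hconv.monotoneOn_deriv (fun t _ => (hφ t).differentiableAt) trivial trivial hst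
  have hH' : HasDerivAt (fun t : ℝ => ⟪f' (x + t • u), u⟫) ⟪H u, u⟫ 0 := by
    have hH0 : HasFDerivAt f' H (x + (0 : ℝ) • u) := by simpa using hH
    simpa using ((hH0.comp_hasDerivAt (0 : ℝ) (hline 0)).inner ℝ
      (hasDerivAt_const (0 : ℝ) u))
  exact hH'.nonneg_of_monotone hmono

theorem isPositive_of_convexOn_of_hasFDerivAt_gradient (hf : ConvexOn ℝ Set.univ f)
    (hf' : ∀ y, HasGradientAt f (f' y) y) (hH : HasFDerivAt f' H x) : H.IsPositive :=
  (H.isPositive_iff).2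
    ⟨isSymmetric_of_hasFDerivAt_gradient hf' hH, inner_apply_self_nonneg_of_convexOn hf hf' hH⟩

end Hessian

theorem ContinuousLinearMap.IsPositive.apply_eq_zero_of_inner_eq_zero
    {E : Type*} [NormedAddCommGroup E] [InnerProductSpace ℝ E] {T : E →L[ℝ] E}
    (hT : T.IsPositive) {u : E} (hu : ⟪T u, u⟫ = 0) : T u = 0 := by
  set a := ‖T u‖ ^ 2
  set b := ⟪T (T u), T u⟫
  have hb : 0 ≤ b := hT.inner_nonneg_left _
  -- expand `0 ≤ ⟪T (u - t • T u), u - t • T u⟫` and take `t = a / (b + 1)`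
  have hquad : ∀ t : ℝ, 0 ≤ t * (t * b - 2 * a) := fun t => by
    have h := hT.inner_nonneg_left (u - t • T u)
    have hsymm : ⟪T (T u), u⟫ = ⟪T u, T u⟫ := hT.isSymmetric _ _
    simp only [map_sub, map_smul, inner_sub_left, inner_sub_right, real_inner_smul_left,
      real_inner_smul_right, hsymm, hu, real_inner_self_eq_norm_sq] at h
    nlinarith
  have ht : a / (b + 1) * (b + 1) = a := div_mul_cancel₀ _ (by linarith)
  have ha : a = 0 := by
    nlinarith [hquad (a / (b + 1)), sq_nonneg (a / (b + 1)), show 0 ≤ a by positivity,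
      show 0 ≤ a / (b + 1) by positivity]
  simpa [a] using ha

theorem ContinuousLinearMap.IsPositive.forall_inner_pos_iff
    {E : Type*} [NormedAddCommGroup E] [InnerProductSpace ℝ E] {T : E →L[ℝ] E}
    (hT : T.IsPositive) (S : Set E) :
    (∀ u ∈ S, u ≠ 0 → 0 < ⟪T u, u⟫) ↔ ∀ u ∈ S, T u = 0 → u = 0 := by
  refine ⟨fun h u hu hTu => ?_, fun h u hu hu0 => ?_⟩
  · by_contra hu0
    simpa [hTu] using h u hu hu0
  · exact (hT.inner_nonneg_left u).lt_of_ne fun h0 =>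
      hu0 (h u hu (hT.apply_eq_zero_of_inner_eq_zero h0.symm))

section Subregularity

variable {E F : Type*} [NormedAddCommGroup E] [NormedSpace ℝ E] [NormedAddCommGroup F]

/-- Strong metric subregularity of the set-valued map `Φ` at `x₀` for the value `0`. -/
def StronglySubregularAt (Φ : E → Set F) (x₀ : E) : Prop :=
  ∃ κ > 0, ∃ ε > 0, ∀ x w, ‖x - x₀‖ ≤ ε → w ∈ Φ x → ‖x - x₀‖ ≤ κ * ‖w‖

theorem StronglySubregularAt.not_isLittleO {Φ : E → Set F} {x₀ u : E} {w : ℝ → F}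
    (h : StronglySubregularAt Φ x₀) (hu : u ≠ 0)
    (hw : ∀ᶠ t in 𝓝[>] 0, w t ∈ Φ (x₀ + t • u)) : ¬(w =o[𝓝[>] 0] fun t => t) := by
  intro ho
  obtain ⟨κ, hκ, ε, hε, hsub⟩ := h
  have hnear : ∀ᶠ t in 𝓝[>] (0 : ℝ), ‖t • u‖ ≤ ε := by
    refine tendsto_nhdsWithin_of_tendsto_nhds ?_ |>.eventually_le_const hε
    simpa using ((continuous_id.smul continuous_const).norm.tendsto (0 : ℝ) :
      Tendsto (fun t : ℝ => ‖t • u‖) _ _)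
  have hsmall := ho.def (c := ‖u‖ / (2 * κ)) (div_pos (norm_pos_iff.2 hu) (by positivity))
  obtain ⟨t, hwt, htε, hwsmall, ht⟩ :=
    (hw.and (hnear.and (hsmall.and self_mem_nhdsWithin))).exists
  have hle := hsub _ _ (by simpa using htε) hwt
  rw [add_sub_cancel_left, norm_smul] at hle
  have : κ * ‖w t‖ ≤ ‖t‖ * ‖u‖ / 2 := by
    calc κ * ‖w t‖ ≤ κ * (‖u‖ / (2 * κ) * ‖t‖) := by gcongr
      _ = ‖t‖ * ‖u‖ / 2 := by field_simp
  have : 0 < ‖t‖ * ‖u‖ := mul_pos (norm_pos_iff.2 (ht : (0 : ℝ) < t).ne') (norm_pos_iff.2 hu)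
  linarith

theorem exists_seq_of_not_stronglySubregularAt [ProperSpace E] [NormedSpace ℝ F]
    {Φ : E → Set F} {x₀ : E} (h : ¬StronglySubregularAt Φ x₀) :
    ∃ (x : ℕ → E) (w : ℕ → F) (u : E), (∀ k, x k ≠ x₀ ∧ w k ∈ Φ (x k)) ∧ ‖u‖ = 1 ∧
      Tendsto x atTop (𝓝 x₀) ∧ Tendsto w atTop (𝓝 0) ∧
      Tendsto (fun k => ‖x k - x₀‖⁻¹ • w k) atTop (𝓝 0) ∧
      Tendsto (fun k => ‖x k - x₀‖⁻¹ • (x k - x₀)) atTop (𝓝 u) := by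
  unfold StronglySubregularAt at h
  push Not at h
  choose x w hxε hw hlt using fun k : ℕ =>
    h (k + 1) (by positivity) (1 / (k + 1)) (by positivity)
  have hd : ∀ k, 0 < ‖x k - x₀‖ := fun k => (by positivity : (0 : ℝ) ≤ _).trans_lt (hlt k)
  have hdw : ∀ k, ‖‖x k - x₀‖⁻¹ • w k‖ ≤ 1 / (k + 1) := fun k => by
    rw [norm_smul, norm_inv, norm_norm, inv_mul_le_iff₀ (hd k)]
    rw [mul_one_div, le_div_iff₀ (by positivity)]
    linarith [hlt k]
  have hd0 : Tendsto (fun k => ‖x k - x₀‖) atTop (𝓝 0) :=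
    squeeze_zero (fun k => (hd k).le) hxε tendsto_one_div_add_atTop_nhds_zero_nat
  have hwd0 : Tendsto (fun k => ‖x k - x₀‖⁻¹ • w k) atTop (𝓝 0) :=
    squeeze_zero_norm hdw tendsto_one_div_add_atTop_nhds_zero_nat
  have hw0 : Tendsto w atTop (𝓝 0) := by
    simpa [smul_smul, (hd _).ne'] using hd0.smul hwd0
  have hsphere : ∀ k, ‖x k - x₀‖⁻¹ • (x k - x₀) ∈ Metric.sphere (0 : E) 1 := fun k => by
    simp [norm_smul, (hd k).ne']
  obtain ⟨u, hu, φ, hφ, hlim⟩ := (isCompact_sphere (0 : E) 1).tendsto_subseq hsphere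
  refine ⟨x ∘ φ, w ∘ φ, u, fun k => ⟨sub_ne_zero.1 (norm_pos_iff.1 (hd _)), hw _⟩,
    by simpa using hu, ?_, hw0.comp hφ.tendsto_atTop, hwd0.comp hφ.tendsto_atTop, hlim⟩
  exact (tendsto_iff_norm_sub_tendsto_zero.2 hd0).comp hφ.tendsto_atTop

end Subregularity

section L1

variable {ι : Type*} {μ : ℝ}

/-- `∂(μ‖·‖₁)(x)`. -/
def l1Subdiff (μ : ℝ) (x : EuclideanSpace ℝ ι) : Set (EuclideanSpace ℝ ι) :=
  {s | ∀ j, IsAbsSubgradient μ (x j) (s j)}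

/-- `∇f(x) + ∂(μ‖·‖₁)(x)`, with `f'` in place of `∇f`. -/
def gradAddL1Subdiff (f' : EuclideanSpace ℝ ι → EuclideanSpace ℝ ι) (μ : ℝ)
    (x : EuclideanSpace ℝ ι) : Set (EuclideanSpace ℝ ι) :=
  {w | ∃ s ∈ l1Subdiff μ x, w = f' x + s}

/-- The cone `𝒱` of the paper, written through the optimal subgradient `s = -∇f(x*)`
(see `criticalCone_eq`). -/
def criticalCone (μ : ℝ) (x s : EuclideanSpace ℝ ι) : Set (EuclideanSpace ℝ ι) :=
  {u | ∀ j, x j = 0 → s j * u j = μ * |u j|}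

theorem criticalCone_eq (hμ : 0 ≤ μ) {x s : EuclideanSpace ℝ ι} (hs : s ∈ l1Subdiff μ x) :
    criticalCone μ x s =
      {u | (∀ j, ¬|s j| = μ → u j = 0) ∧ (∀ j, |s j| = μ → x j = 0 → 0 ≤ u j * s j)} := by
  ext u
  have hcrit (j) := mul_eq_mul_abs_iff (v := u j) ((isAbsSubgradient_iff hμ).1 (hs j)).1
  simp only [criticalCone, Set.mem_ofPred_eq]
  refine ⟨fun h => ⟨fun j hj => ?_, fun j hj hx => ((hcrit j).1 (h j hx)).2 hj⟩,
    fun h j hx => (hcrit j).2 ⟨h.1 j, fun hj => h.2 j hj hx⟩⟩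
  by_cases hx : x j = 0
  · exact ((hcrit j).1 (h j hx)).1 hj
  · exact absurd ((hs j).abs_eq hμ hx) hj

theorem inner_sub_nonneg_of_mem_l1Subdiff [Fintype ι] (hμ : 0 ≤ μ) {x y s t : EuclideanSpace ℝ ι}
    (hs : s ∈ l1Subdiff μ x) (ht : t ∈ l1Subdiff μ y) : 0 ≤ ⟪s - t, x - y⟫ := by
  rw [PiLp.inner_apply]
  exact Finset.sum_nonneg fun j _ => by
    simpa [mul_comm] using (hs j).mul_sub_nonneg hμ (ht j)

theorem eventually_mem_l1Subdiff_add_smul [Finite ι] (hμ : 0 ≤ μ) {x s u : EuclideanSpace ℝ ι}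
    (hs : s ∈ l1Subdiff μ x) (hu : u ∈ criticalCone μ x s) :
    ∀ᶠ t in 𝓝[>] (0 : ℝ), s ∈ l1Subdiff μ (x + t • u) := by
  simp only [l1Subdiff, Set.mem_ofPred_eq, PiLp.add_apply, PiLp.smul_apply, smul_eq_mul]
  exact eventually_all.2 fun j => (hs j).eventually_add_mul hμ (hu j)

theorem mem_criticalCone_of_tendsto [Fintype ι] (hμ : 0 ≤ μ) {α : Type*} {l : Filter α} [l.NeBot]
    {x s : α → EuclideanSpace ℝ ι} {c : α → ℝ} {x₀ s₀ u : EuclideanSpace ℝ ι}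
    (hc : ∀ k, 0 < c k) (hs : ∀ k, s k ∈ l1Subdiff μ (x k)) (hslim : Tendsto s l (𝓝 s₀))
    (hu : Tendsto (fun k => c k • (x k - x₀)) l (𝓝 u)) : u ∈ criticalCone μ x₀ s₀ := by
  intro j hj
  have hcoord {v : α → EuclideanSpace ℝ ι} {v₀ : EuclideanSpace ℝ ι} (hv : Tendsto v l (𝓝 v₀)) :
      Tendsto (fun k => v k j) l (𝓝 (v₀ j)) :=
    ((EuclideanSpace.proj j).continuous.tendsto v₀).comp hv
  have hscaled : ∀ k, s k j * (c k • (x k - x₀)) j = μ * |(c k • (x k - x₀)) j| := fun k => by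
    rw [PiLp.smul_apply, PiLp.sub_apply, hj, sub_zero, smul_eq_mul, abs_mul, abs_of_pos (hc k),
      mul_left_comm, ((isAbsSubgradient_iff hμ).1 (hs k j)).2]
    ring
  refine tendsto_nhds_unique ((hcoord hslim).mul (hcoord hu)) ?_
  simpa only [← hscaled] using ((hcoord hu).abs.const_mul μ)

variable [Fintype ι] {f' : EuclideanSpace ℝ ι → EuclideanSpace ℝ ι}
  {H : EuclideanSpace ℝ ι →L[ℝ] EuclideanSpace ℝ ι} {x₀ s₀ : EuclideanSpace ℝ ι}

theorem inner_apply_nonpos_of_tendsto (hμ : 0 ≤ μ) (hH : HasFDerivAt f' H x₀)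
    (hs₀ : s₀ ∈ l1Subdiff μ x₀) (hopt : f' x₀ + s₀ = 0) {α : Type*} {l : Filter α} [l.NeBot]
    {x s : α → EuclideanSpace ℝ ι} {c : α → ℝ} {u : EuclideanSpace ℝ ι} (hc : ∀ k, 0 < c k)
    (hs : ∀ k, s k ∈ l1Subdiff μ (x k)) (hx : Tendsto x l (𝓝 x₀))
    (hw : Tendsto (fun k => c k • (f' (x k) + s k)) l (𝓝 0))
    (hu : Tendsto (fun k => c k • (x k - x₀)) l (𝓝 u)) : ⟪H u, u⟫ ≤ 0 := by
  have hquot : Tendsto (fun k => c k • (f' (x k) - f' x₀)) l (𝓝 (H u)) := by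
    simpa using hH.hasFDerivWithinAt.lim (s := Set.univ) (d := fun k => x k - x₀)
      (tendsto_sub_nhds_zero_iff.2 hx) (by simp) hu
  have hw' : Tendsto (fun k => ⟪c k • (f' (x k) + s k), c k • (x k - x₀)⟫) l (𝓝 0) := by
    simpa using hw.inner hu
  refine le_of_tendsto_of_tendsto' (hquot.inner hu) hw' fun k => ?_
  have hsplit : f' (x k) - f' x₀ = (f' (x k) + s k) - (s k - s₀) := by
    rw [eq_neg_of_add_eq_zero_left hopt]; abel
  rw [hsplit, smul_sub, inner_sub_left, sub_le_self_iff, real_inner_smul_left,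
    real_inner_smul_right]
  exact mul_nonneg (hc k).le (mul_nonneg (hc k).le
    (inner_sub_nonneg_of_mem_l1Subdiff hμ (hs k) hs₀))

theorem stronglySubregularAt_of_inner_pos (hμ : 0 ≤ μ) (hH : HasFDerivAt f' H x₀)
    (hs₀ : s₀ ∈ l1Subdiff μ x₀) (hopt : f' x₀ + s₀ = 0)
    (hpos : ∀ u ∈ criticalCone μ x₀ s₀, u ≠ 0 → 0 < ⟪H u, u⟫) :
    StronglySubregularAt (gradAddL1Subdiff f' μ) x₀ := by
  by_contra hns
  obtain ⟨x, w, u, hxw, hu1, hx, hw, hwd, hud⟩ := exists_seq_of_not_stronglySubregularAt hns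
  choose s hs hws using fun k => (hxw k).2
  have hc : ∀ k, 0 < ‖x k - x₀‖⁻¹ := fun k => inv_pos.2 (norm_pos_iff.2 (sub_ne_zero.2 (hxw k).1))
  have hslim : Tendsto s atTop (𝓝 s₀) := by
    have hsw : s = fun k => w k - f' (x k) := funext fun k => by rw [hws k]; abel
    rw [hsw, eq_neg_of_add_eq_zero_right hopt]
    simpa using hw.sub (hH.continuousAt.tendsto.comp hx)
  have hcone := mem_criticalCone_of_tendsto hμ hc hs hslim hud
  have hquad := inner_apply_nonpos_of_tendsto hμ hH hs₀ hopt hc hs hx (by simpa [hws] using hwd) hud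
  exact (hpos u hcone (by rintro rfl; simp at hu1)).not_ge hquad

theorem eq_zero_of_stronglySubregularAt (hμ : 0 ≤ μ)
    (hsub : StronglySubregularAt (gradAddL1Subdiff f' μ) x₀) (hH : HasFDerivAt f' H x₀)
    (hs₀ : s₀ ∈ l1Subdiff μ x₀) (hopt : f' x₀ + s₀ = 0) {u : EuclideanSpace ℝ ι}
    (hu : u ∈ criticalCone μ x₀ s₀) (hHu : H u = 0) : u = 0 := by
  by_contra hu0
  refine hsub.not_isLittleO hu0 (w := fun t => f' (x₀ + t • u) + s₀) ?_ ?_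
  · filter_upwards [eventually_mem_l1Subdiff_add_smul hμ hs₀ hu] with t ht using ⟨s₀, ht, rfl⟩
  · have hline : HasDerivAt (fun t : ℝ => f' (x₀ + t • u)) 0 0 := by
      have hH0 : HasFDerivAt f' H (x₀ + (0 : ℝ) • u) := by simpa using hH
      have := hH0.comp_hasDerivAt (0 : ℝ) (((hasDerivAt_id (0 : ℝ)).smul_const u).const_add x₀)
      rwa [one_smul, hHu] at this
    refine ((hasDerivAt_iff_isLittleO.1 hline).mono nhdsWithin_le_nhds).congr (fun t => ?_)
      (fun t => sub_zero t)
    simp [eq_neg_of_add_eq_zero_left hopt]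

end L1

/-- Characterization of strong metric subregularity of `∂F₁ = ∇f + ∂(μ‖·‖₁)` at an
optimal solution `x*` for `0`, in terms of positive definiteness / nonsingularity
of the Hessian `∇²f(x*)` over the cone `𝒱`. -/
theorem stmt_17 (n : ℕ) (μ : ℝ) (hμ : 0 < μ)
    (f : EuclideanSpace ℝ (Fin n) → ℝ) (hf : ConvexOn ℝ Set.univ f)
    (f' : EuclideanSpace ℝ (Fin n) → EuclideanSpace ℝ (Fin n))
    (hf' : ∀ x, HasGradientAt f (f' x) x)
    (xstar : EuclideanSpace ℝ (Fin n))
    (hess : EuclideanSpace ℝ (Fin n) →L[ℝ] EuclideanSpace ℝ (Fin n))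
    (hhess : HasFDerivAt f' hess xstar)
    (hopt : ∃ sv : EuclideanSpace ℝ (Fin n),
      (∀ j, (xstar j ≠ 0 → sv j = μ * Real.sign (xstar j)) ∧
        (xstar j = 0 → |sv j| ≤ μ)) ∧ f' xstar + sv = 0)
    (V : Set (EuclideanSpace ℝ (Fin n)))
    (hV : V = {u | (∀ j, ¬ |f' xstar j| = μ → u j = 0) ∧
      (∀ j, |f' xstar j| = μ → xstar j = 0 → u j * f' xstar j ≤ 0)}) :
    ((∃ κ > 0, ∃ ε > 0, ∀ x w : EuclideanSpace ℝ (Fin n), ‖x - xstar‖ ≤ ε →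
        (∃ sv : EuclideanSpace ℝ (Fin n),
          (∀ j, (x j ≠ 0 → sv j = μ * Real.sign (x j)) ∧ (x j = 0 → |sv j| ≤ μ)) ∧
          w = f' x + sv) →
        ‖x - xstar‖ ≤ κ * ‖w‖) ↔
      (∀ u ∈ V, u ≠ 0 → 0 < ⟪hess u, u⟫)) ∧
    ((∀ u ∈ V, u ≠ 0 → 0 < ⟪hess u, u⟫) ↔ (∀ u ∈ V, hess u = 0 → u = 0)) := by
  obtain ⟨sstar, hsstar, hopt⟩ := hopt
  have hV' : V = criticalCone μ xstar sstar := by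
    rw [hV, criticalCone_eq hμ.le hsstar, eq_neg_of_add_eq_zero_left hopt]
    simp only [PiLp.neg_apply, abs_neg, mul_neg, neg_nonpos]
  subst hV'
  have hpos := (isPositive_of_convexOn_of_hasFDerivAt_gradient hf hf' hhess).forall_inner_pos_iff
    (criticalCone μ xstar sstar)
  refine ⟨⟨fun hsub => hpos.2 fun u hu => ?_, fun hpd => ?_⟩, hpos⟩
  · exact eq_zero_of_stronglySubregularAt hμ.le hsub hhess hsstar hopt hu
  · exact stronglySubregularAt_of_inner_pos hμ.le hhess hsstar hopt hpd
end
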